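/- Define K(v₁,v₂) := 2·ψ(r)·K₁(r) + v₁²·(2·ψ(r)·K₂(r) − 4·K₁(r)²) + v₂²·K₁(r)·(5·K₁(r) + K₂(r)·r²), where r := √(v₁²+v₂²), K₁(r) := ψ′(r)/r and K₂(r) := (1/r)·(ψ′(r)/r)′. Then for every v = (v₁,v₂) ∈ ℝ² with 0 < |v| < ϑ₁ and |v| ≠ π, one has K(v₁,v₂) = (2/(Υ(|v|)³·|v|))·[ (−Υ″(|v|)/|v|)·v₁² + (−Υ′(|v|)/sin²|v|)·v₂² ]. -/

import Mathlib

/-!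
Away from `r = 0` and the zeros of `sin r`, all quantities are explicit rational functions of
`r`, `sin r` and `cos r`, once the derivatives of `ψ` and `Υ` are computed in closed form.
Eliminating `v₂² = r² − v₁²` splits the identity into its `v₁²`-free part and its
`v₁²`-coefficient, two identities in `r` alone. The bound `r < ϑ₁` only serves to keep the
denominator `sin r − r cos r` of `Υ` nonzero: it increases on `[0, π]` and decreases on
`[π, ϑ₁]`, where it vanishes at `ϑ₁` because `tan ϑ₁ = ϑ₁`.
-/

open Real MeasureTheory Asymptotics Filter

noncomputable section
open scoped Classical

/-- `ψ(r) = (1 − r·cot r)/r²`, extended continuously by `ψ(0) := 1/3`. -/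
def psi (r : ℝ) : ℝ := if r = 0 then 1/3 else (1 - r * (Real.cos r / Real.sin r)) / r ^ 2

/-- `K₁(r) := ψ′(r)/r`. -/
def K1 (r : ℝ) : ℝ := deriv psi r / r

/-- `K₂(r) := (1/r)·(ψ′(r)/r)′`. -/
def K2 (r : ℝ) : ℝ := deriv (fun s => deriv psi s / s) r / r

/-- `Υ(r) = r²·sin r/(sin r − r·cos r)` with `Υ(0) := 3`. -/
def Ups (r : ℝ) : ℝ :=
  if r = 0 then 3 else r ^ 2 * Real.sin r / (Real.sin r - r * Real.cos r)

open scoped Topology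

lemma sin_ne_zero_of_pos_of_lt_two_pi_of_ne_pi {x : ℝ} (h0 : 0 < x) (h2π : x < 2 * π)
    (hπ : x ≠ π) : sin x ≠ 0 := by
  intro hx
  have h := (sin_eq_zero_iff_of_lt_of_lt (x := x - π) (by linarith) (by linarith)).1
    (by rw [sin_sub_pi, hx, neg_zero])
  exact hπ (by linarith)

lemma sin_neg_of_pi_lt_of_lt_two_pi {x : ℝ} (hπ : π < x) (h2π : x < 2 * π) : sin x < 0 := by
  have h := sin_pos_of_pos_of_lt_pi (x := x - π) (by linarith) (by linarith)
  rw [sin_sub_pi] at h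
  linarith

lemma hasDerivAt_sin_sub_mul_cos (x : ℝ) :
    HasDerivAt (fun y => sin y - y * cos y) (x * sin x) x :=
  ((hasDerivAt_sin x).fun_sub ((hasDerivAt_id' x).fun_mul (hasDerivAt_cos x))).congr_deriv
    (by simp)

lemma sin_sub_mul_cos_pos_of_mem_Ioc {x : ℝ} (hx : x ∈ Set.Ioc 0 π) :
    0 < sin x - x * cos x := by
  have hmono : StrictMonoOn (fun y => sin y - y * cos y) (Set.Icc 0 π) :=
    strictMonoOn_of_deriv_pos (convex_Icc 0 π) (by fun_prop) fun y hy => by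
      rw [interior_Icc] at hy
      rw [(hasDerivAt_sin_sub_mul_cos y).deriv]
      exact mul_pos hy.1 (sin_pos_of_pos_of_lt_pi hy.1 hy.2)
  simpa using hmono ⟨le_rfl, pi_pos.le⟩ (Set.Ioc_subset_Icc_self hx) hx.1

lemma sin_sub_mul_cos_pos_of_mem_Ico {ϑ x : ℝ} (hϑ : ϑ ∈ Set.Ioo π (3 * π / 2))
    (hϑtan : tan ϑ = ϑ) (hx : x ∈ Set.Ico π ϑ) : 0 < sin x - x * cos x := by
  have hanti : StrictAntiOn (fun y => sin y - y * cos y) (Set.Icc π ϑ) :=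
    strictAntiOn_of_deriv_neg (convex_Icc π ϑ) (by fun_prop) fun y hy => by
      rw [interior_Icc] at hy
      rw [(hasDerivAt_sin_sub_mul_cos y).deriv]
      exact mul_neg_of_pos_of_neg (by linarith [pi_pos, hy.1])
        (sin_neg_of_pi_lt_of_lt_two_pi hy.1 (by linarith [hy.2, hϑ.2, pi_pos]))
  have hzero : sin ϑ - ϑ * cos ϑ = 0 := by
    have hcos : cos ϑ ≠ 0 :=
      (cos_neg_of_pi_div_two_lt_of_lt (by linarith [pi_pos, hϑ.1]) (by linarith [hϑ.2])).ne
    rw [tan_eq_sin_div_cos, div_eq_iff hcos] at hϑtan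
    linarith
  simpa [hzero] using hanti (Set.Ico_subset_Icc_self hx) ⟨hϑ.1.le, le_rfl⟩ hx.2

lemma sin_sub_mul_cos_pos {ϑ x : ℝ} (hϑ : ϑ ∈ Set.Ioo π (3 * π / 2)) (hϑtan : tan ϑ = ϑ)
    (hx0 : 0 < x) (hxϑ : x < ϑ) : 0 < sin x - x * cos x :=
  (le_or_gt x π).elim (fun h => sin_sub_mul_cos_pos_of_mem_Ioc ⟨hx0, h⟩)
    (fun h => sin_sub_mul_cos_pos_of_mem_Ico hϑ hϑtan ⟨h.le, hxϑ⟩)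

lemma hasDerivAt_psi {x : ℝ} (hx : x ≠ 0) (hs : sin x ≠ 0) :
    HasDerivAt psi ((x ^ 2 + x * sin x * cos x - 2 * sin x ^ 2) / (x ^ 3 * sin x ^ 2)) x := by
  have heq : psi =ᶠ[𝓝 x] fun y => (1 - y * (cos y / sin y)) / y ^ 2 := by
    filter_upwards [eventually_ne_nhds hx] with y hy
    simp [psi, hy]
  have h : HasDerivAt (fun y => (1 - y * (cos y / sin y)) / y ^ 2) _ x :=
    (((hasDerivAt_id' x).fun_mul ((hasDerivAt_cos x).fun_div (hasDerivAt_sin x) hs)).const_sub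
      1).fun_div (hasDerivAt_pow 2 x) (pow_ne_zero 2 hx)
  refine (h.congr_deriv ?_).congr_of_eventuallyEq heq
  field_simp
  linear_combination x ^ 3 * sin_sq_add_cos_sq x

lemma hasDerivAt_deriv_psi_div {x : ℝ} (hx : x ≠ 0) (hs : sin x ≠ 0) :
    HasDerivAt (fun y => deriv psi y / y)
      ((8 * sin x ^ 3 - 3 * x * sin x ^ 2 * cos x - 3 * x ^ 2 * sin x - 2 * x ^ 3 * cos x)
        / (x ^ 5 * sin x ^ 3)) x := by
  have heq : (fun y => deriv psi y / y) =ᶠ[𝓝 x]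
      fun y => (y ^ 2 + y * sin y * cos y - 2 * sin y ^ 2) / (y ^ 4 * sin y ^ 2) := by
    filter_upwards [eventually_ne_nhds hx, continuous_sin.continuousAt.eventually_ne hs]
      with y hy hsy
    rw [(hasDerivAt_psi hy hsy).deriv]
    field_simp
  have h : HasDerivAt
      (fun y => (y ^ 2 + y * sin y * cos y - 2 * sin y ^ 2) / (y ^ 4 * sin y ^ 2)) _ x :=
    (((hasDerivAt_pow 2 x).fun_add (((hasDerivAt_id' x).fun_mul (hasDerivAt_sin x)).fun_mul
      (hasDerivAt_cos x))).fun_sub (((hasDerivAt_sin x).fun_pow 2).const_mul 2)).fun_div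
      ((hasDerivAt_pow 4 x).fun_mul ((hasDerivAt_sin x).fun_pow 2)) (by positivity)
  refine (h.congr_deriv ?_).congr_of_eventuallyEq heq
  field_simp
  linear_combination -(x ^ 5 * sin x ^ 2) * sin_sq_add_cos_sq x

lemma hasDerivAt_Ups {x : ℝ} (hx : x ≠ 0) (hD : sin x - x * cos x ≠ 0) :
    HasDerivAt Ups ((2 * x * sin x ^ 2 - x ^ 2 * sin x * cos x - x ^ 3)
      / (sin x - x * cos x) ^ 2) x := by
  have heq : Ups =ᶠ[𝓝 x] fun y => y ^ 2 * sin y / (sin y - y * cos y) := by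
    filter_upwards [eventually_ne_nhds hx] with y hy
    simp [Ups, hy]
  have h : HasDerivAt (fun y => y ^ 2 * sin y / (sin y - y * cos y)) _ x :=
    ((hasDerivAt_pow 2 x).fun_mul (hasDerivAt_sin x)).fun_div (hasDerivAt_sin_sub_mul_cos x) hD
  refine (h.congr_deriv ?_).congr_of_eventuallyEq heq
  field_simp
  linear_combination -x ^ 3 * sin_sq_add_cos_sq x

lemma hasDerivAt_deriv_Ups {x : ℝ} (hx : x ≠ 0) (hD : sin x - x * cos x ≠ 0) :
    HasDerivAt (deriv Ups)
      ((2 * sin x ^ 4 - 2 * x * sin x ^ 3 * cos x - 6 * x ^ 2 * sin x ^ 2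
          + 10 * x ^ 3 * sin x * cos x - 4 * x ^ 4 + 6 * x ^ 4 * sin x ^ 2
          - 2 * x ^ 5 * sin x * cos x)
        / (sin x - x * cos x) ^ 4) x := by
  have heq : deriv Ups =ᶠ[𝓝 x] fun y =>
      (2 * y * sin y ^ 2 - y ^ 2 * sin y * cos y - y ^ 3) / (sin y - y * cos y) ^ 2 := by
    filter_upwards [eventually_ne_nhds hx,
      (hasDerivAt_sin_sub_mul_cos x).continuousAt.eventually_ne hD] with y hy hDy
    exact (hasDerivAt_Ups hy hDy).deriv
  have h : HasDerivAt (fun y =>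
      (2 * y * sin y ^ 2 - y ^ 2 * sin y * cos y - y ^ 3) / (sin y - y * cos y) ^ 2) _ x :=
    (((((hasDerivAt_id' x).const_mul 2).fun_mul ((hasDerivAt_sin x).fun_pow 2)).fun_sub
      (((hasDerivAt_pow 2 x).fun_mul (hasDerivAt_sin x)).fun_mul (hasDerivAt_cos x))).fun_sub
      (hasDerivAt_pow 3 x)).fun_div ((hasDerivAt_sin_sub_mul_cos x).fun_pow 2) (pow_ne_zero 2 hD)
  refine (h.congr_deriv ?_).congr_of_eventuallyEq heq
  field_simp
  linear_combination (-3 * x ^ 2 * sin x ^ 2 + 4 * x ^ 3 * sin x * cos x - 4 * x ^ 4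
    - x ^ 4 * cos x ^ 2) * sin_sq_add_cos_sq x

lemma two_mul_psi_mul_K1_add_eq {r : ℝ} (hr : r ≠ 0) (hs : sin r ≠ 0)
    (hD : sin r - r * cos r ≠ 0) :
    2 * psi r * K1 r + r ^ 2 * K1 r * (5 * K1 r + K2 r * r ^ 2)
      = 2 / (Ups r ^ 3 * r) * (-deriv Ups r / sin r ^ 2 * r ^ 2) := by
  simp only [K1, K2]
  rw [(hasDerivAt_psi hr hs).deriv, (hasDerivAt_deriv_psi_div hr hs).deriv,
    (hasDerivAt_Ups hr hD).deriv]
  simp only [psi, Ups, if_neg hr]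
  field_simp
  ring

lemma two_mul_psi_mul_K2_sub_eq {r : ℝ} (hr : r ≠ 0) (hs : sin r ≠ 0)
    (hD : sin r - r * cos r ≠ 0) :
    2 * psi r * K2 r - 4 * K1 r ^ 2 - K1 r * (5 * K1 r + K2 r * r ^ 2)
      = 2 / (Ups r ^ 3 * r) * (-deriv (deriv Ups) r / r + deriv Ups r / sin r ^ 2) := by
  simp only [K1, K2]
  rw [(hasDerivAt_psi hr hs).deriv, (hasDerivAt_deriv_psi_div hr hs).deriv,
    (hasDerivAt_Ups hr hD).deriv, (hasDerivAt_deriv_Ups hr hD).deriv]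
  simp only [psi, Ups, if_neg hr]
  field_simp
  linear_combination (12 * r ^ 4 * sin r ^ 2 - 4 * r ^ 5 * sin r * cos r) * sin_sq_add_cos_sq r

/-- the identity
`K(v₁,v₂) = (2/(Υ(|v|)³|v|))·[(−Υ″(|v|)/|v|)v₁² + (−Υ′(|v|)/sin²|v|)v₂²]`
for `0 < |v| < ϑ₁`, `|v| ≠ π`, where
`K = 2ψK₁ + v₁²(2ψK₂ − 4K₁²) + v₂²K₁(5K₁ + K₂r²)`. -/
theorem statement18 (ϑ : ℝ) (hϑ : ϑ ∈ Set.Ioo Real.pi (3 * Real.pi / 2)) (hϑtan : Real.tan ϑ = ϑ) :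
    ∀ v₁ v₂ r : ℝ, r = Real.sqrt (v₁ ^ 2 + v₂ ^ 2) → 0 < r → r < ϑ → r ≠ Real.pi →
      2 * psi r * K1 r + v₁ ^ 2 * (2 * psi r * K2 r - 4 * K1 r ^ 2) +
          v₂ ^ 2 * K1 r * (5 * K1 r + K2 r * r ^ 2)
        = 2 / (Ups r ^ 3 * r) *
            (-deriv (deriv Ups) r / r * v₁ ^ 2 +
              -deriv Ups r / Real.sin r ^ 2 * v₂ ^ 2) := by
  intro v₁ v₂ r hr hr0 hrϑ hrπ
  have hv : v₁ ^ 2 + v₂ ^ 2 = r ^ 2 := by rw [hr, sq_sqrt (by positivity)]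
  have hs : sin r ≠ 0 :=
    sin_ne_zero_of_pos_of_lt_two_pi_of_ne_pi hr0 (by linarith [hϑ.2, pi_pos]) hrπ
  have hD : sin r - r * cos r ≠ 0 := (sin_sub_mul_cos_pos hϑ hϑtan hr0 hrϑ).ne'
  linear_combination two_mul_psi_mul_K1_add_eq hr0.ne' hs hD
    + v₁ ^ 2 * two_mul_psi_mul_K2_sub_eq hr0.ne' hs hD
    + (K1 r * (5 * K1 r + K2 r * r ^ 2) + 2 / (Ups r ^ 3 * r) * (deriv Ups r / sin r ^ 2)) * hv
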